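/- arXiv:2411.15227 — 2 statements merged into one kernel-verified Lean document; each statement's English description precedes it below -/
import Mathlib

section
/- (Picone-type inequality for the Finsler p-Laplacian) Let p > 1 and let F: ℝ^N → ℝ be convex, C^1 away from 0, with F(tξ) = |t|F(ξ). Let u > 0 and v ≥ 0 be differentiable functions on an open set with ∇u ≠ 0. Then ⟨F(∇u)^{p-1} ∇F(∇u), ∇(v^p / u^{p-1})⟩ ≤ F(∇v)^p pointwise. -/
/-!
Convexity and absolute homogeneity make `F` nonnegative and subadditive, so at a point `a` where
`F` is differentiable its derivative satisfies `DF(a) η ≤ F η` and, by Euler's identity,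
`DF(a) a = F a`. With `r = v / u`, the gradient of `v ^ p / u ^ (p - 1)` is
`p r ^ (p - 1) ∇v - (p - 1) r ^ p ∇u`; pairing it with `∇F(∇u)` bounds the left-hand side by
`p t ^ (p - 1) F(∇v) - (p - 1) t ^ p` with `t = r F(∇u)`, and Young's inequality bounds this by
`F(∇v) ^ p`.
-/

open Real RealInnerProductSpace

section AbsHomogeneous

variable {E : Type*} [NormedAddCommGroup E] [NormedSpace ℝ E] {F : E → ℝ}

theorem ConvexOn.fderiv_apply_le_sub (hF : ConvexOn ℝ Set.univ F) {a : E}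
    (hd : DifferentiableAt ℝ F a) (ξ : E) : fderiv ℝ F a ξ ≤ F (a + ξ) - F a := by
  have hline : HasDerivAt (AffineMap.lineMap a (a + ξ) : ℝ → E) ξ 0 := by
    simpa using AffineMap.hasDerivAt_lineMap (a := a) (b := a + ξ) (x := (0 : ℝ))
  have hcomp : HasDerivAt (F ∘ AffineMap.lineMap (k := ℝ) a (a + ξ)) (fderiv ℝ F a ξ) 0 := by
    refine HasFDerivAt.comp_hasDerivAt _ ?_ hline
    simpa using hd.hasFDerivAt
  simpa [slope] using (hF.comp_affineMap (AffineMap.lineMap a (a + ξ))).le_slope_of_hasDerivAt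
    (Set.mem_univ 0) (Set.mem_univ 1) one_pos hcomp

variable (hhom : ∀ (t : ℝ) (ξ : E), F (t • ξ) = |t| * F ξ)
include hhom

theorem map_zero_of_abs_homogeneous : F 0 = 0 := by
  simpa using hhom 0 0

theorem ConvexOn.add_le_of_abs_homogeneous (hF : ConvexOn ℝ Set.univ F) (ξ η : E) :
    F (ξ + η) ≤ F ξ + F η := by
  have hmid := hF.2 (Set.mem_univ ξ) (Set.mem_univ η) (by norm_num : (0 : ℝ) ≤ 1 / 2)
    (by norm_num : (0 : ℝ) ≤ 1 / 2) (by norm_num)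
  have hdouble := hhom 2 ((1 / 2 : ℝ) • ξ + (1 / 2 : ℝ) • η)
  rw [smul_add, smul_smul, smul_smul] at hdouble
  norm_num at hdouble hmid
  linarith

theorem ConvexOn.nonneg_of_abs_homogeneous (hF : ConvexOn ℝ Set.univ F) (ξ : E) : 0 ≤ F ξ := by
  have h := hF.add_le_of_abs_homogeneous hhom ξ (-ξ)
  rw [add_neg_cancel, map_zero_of_abs_homogeneous hhom, ← neg_one_smul ℝ ξ, hhom] at h
  norm_num at h
  linarith

theorem ConvexOn.fderiv_apply_le_of_abs_homogeneous (hF : ConvexOn ℝ Set.univ F) {a : E}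
    (hd : DifferentiableAt ℝ F a) (η : E) : fderiv ℝ F a η ≤ F η := by
  linarith [hF.fderiv_apply_le_sub hd η, hF.add_le_of_abs_homogeneous hhom a η]

theorem ConvexOn.fderiv_apply_self_of_abs_homogeneous (hF : ConvexOn ℝ Set.univ F) {a : E}
    (hd : DifferentiableAt ℝ F a) : fderiv ℝ F a a = F a := by
  have h := hF.fderiv_apply_le_sub hd (-a)
  rw [add_neg_cancel, map_zero_of_abs_homogeneous hhom, map_neg] at h
  linarith [hF.fderiv_apply_le_of_abs_homogeneous hhom hd a]

end AbsHomogeneous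

theorem Real.mul_rpow_sub_one_mul_sub_le_rpow {p s t : ℝ} (hp : 1 < p) (hs : 0 ≤ s)
    (ht : 0 ≤ t) : p * t ^ (p - 1) * s - (p - 1) * t ^ p ≤ s ^ p := by
  have hp0 : 0 < p := by linarith
  have hpow : (t ^ (p - 1)) ^ (p / (p - 1)) = t ^ p := by
    rw [← rpow_mul ht]
    congr 1
    field_simp [(sub_pos.2 hp).ne']
  have hpq : p.HolderConjugate (p / (p - 1)) := .conjExponent hp
  have young := young_inequality_of_nonneg hs (rpow_nonneg ht (p - 1)) hpq
  rw [hpow, div_div_eq_mul_div] at young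
  have := mul_le_mul_of_nonneg_left young hp0.le
  field_simp at this
  linarith

theorem HasFDerivAt.rpow_div_rpow_sub_one {E : Type*} [NormedAddCommGroup E] [NormedSpace ℝ E]
    {u v : E → ℝ} {u' v' : E →L[ℝ] ℝ} {x : E} {p : ℝ} (hu : HasFDerivAt u u' x)
    (hv : HasFDerivAt v v' x) (hp : 1 ≤ p) (hux : 0 < u x) (hvx : 0 ≤ v x) :
    HasFDerivAt (fun y => v y ^ p / u y ^ (p - 1))
      ((p * (v x / u x) ^ (p - 1)) • v' - ((p - 1) * (v x / u x) ^ p) • u') x := by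
  have hup : 0 < u x ^ (p - 1) := rpow_pos_of_pos hux _
  have h : HasFDerivAt (fun y => v y ^ p * (u y ^ (p - 1))⁻¹)
      (v x ^ p • -((u x ^ (p - 1)) ^ 2)⁻¹ • ((p - 1) * u x ^ (p - 1 - 1)) • u' +
        (u x ^ (p - 1))⁻¹ • (p * v x ^ (p - 1)) • v') x :=
    (hv.rpow_const (Or.inr hp)).mul
      ((hasDerivAt_inv hup.ne').comp_hasFDerivAt x (hu.rpow_const (Or.inl hux.ne')))
  have hv_coeff : (u x ^ (p - 1))⁻¹ * (p * v x ^ (p - 1)) = p * (v x / u x) ^ (p - 1) := by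
    rw [div_rpow hvx hux.le]
    ring
  have hu_coeff : v x ^ p * -((u x ^ (p - 1)) ^ 2)⁻¹ * ((p - 1) * u x ^ (p - 1 - 1)) =
      -((p - 1) * (v x / u x) ^ p) := by
    rw [div_rpow hvx hux.le, rpow_sub_one hux.ne' (p - 1), rpow_sub_one hux.ne' p]
    field_simp
  rw [smul_smul, smul_smul, smul_smul, hv_coeff, hu_coeff] at h
  simp only [div_eq_mul_inv] at h ⊢
  refine h.congr_fderiv ?_
  ext y
  simp only [add_apply, sub_apply, smul_apply, smul_eq_mul]
  ring

theorem stmt1 {N : ℕ} (p : ℝ) (hp : 1 < p) (F : EuclideanSpace ℝ (Fin N) → ℝ)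
    (hconv : ConvexOn ℝ Set.univ F)
    (hdiff : ∀ ξ : EuclideanSpace ℝ (Fin N), ξ ≠ 0 → DifferentiableAt ℝ F ξ)
    (hhom : ∀ (t : ℝ) (ξ : EuclideanSpace ℝ (Fin N)), F (t • ξ) = |t| * F ξ)
    (u v : EuclideanSpace ℝ (Fin N) → ℝ) (x : EuclideanSpace ℝ (Fin N))
    (hu : DifferentiableAt ℝ u x) (hv : DifferentiableAt ℝ v x)
    (hupos : 0 < u x) (hvnn : 0 ≤ v x) (hgu : gradient u x ≠ 0) :
    F (gradient u x) ^ (p - 1) *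
      ⟪gradient F (gradient u x), gradient (fun y => v y ^ p / u y ^ (p - 1)) x⟫
      ≤ F (gradient v x) ^ p := by
  set a := gradient u x
  set b := gradient v x
  set r := v x / u x
  have hDF : DifferentiableAt ℝ F a := hdiff a hgu
  have hFa : 0 ≤ F a := hconv.nonneg_of_abs_homogeneous hhom a
  have hr : 0 ≤ r := div_nonneg hvnn hupos.le
  have hv_w : fderiv ℝ v x (gradient F a) = fderiv ℝ F a b := by
    rw [← inner_gradient_left, real_inner_comm, inner_gradient_left]
  have hu_w : fderiv ℝ u x (gradient F a) = F a := by
    rw [← inner_gradient_left, real_inner_comm, inner_gradient_left,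
      hconv.fderiv_apply_self_of_abs_homogeneous hhom hDF]
  have hFa_pow : F a ^ p = F a ^ (p - 1) * F a := by
    conv_lhs => rw [← sub_add_cancel p 1, rpow_add' hFa (by linarith), rpow_one]
  calc F a ^ (p - 1) * ⟪gradient F a, gradient (fun y => v y ^ p / u y ^ (p - 1)) x⟫
      = F a ^ (p - 1) * (p * r ^ (p - 1) * fderiv ℝ F a b - (p - 1) * r ^ p * F a) := by
        rw [real_inner_comm, inner_gradient_left,
          (hu.hasFDerivAt.rpow_div_rpow_sub_one hv.hasFDerivAt hp.le hupos hvnn).fderiv,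
          sub_apply, smul_apply, smul_apply, hv_w, hu_w, smul_eq_mul, smul_eq_mul]
    _ ≤ F a ^ (p - 1) * (p * r ^ (p - 1) * F b - (p - 1) * r ^ p * F a) := by
        gcongr
        exact hconv.fderiv_apply_le_of_abs_homogeneous hhom hDF b
    _ = p * (r * F a) ^ (p - 1) * F b - (p - 1) * (r * F a) ^ p := by
        rw [mul_rpow hr hFa, mul_rpow hr hFa, hFa_pow]
        ring
    _ ≤ F b ^ p :=
        mul_rpow_sub_one_mul_sub_le_rpow hp (hconv.nonneg_of_abs_homogeneous hhom b)
          (mul_nonneg hr hFa)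
end

section
/- Let Ω ⊂ ℝ^N be open and connected, let U ∈ W^{1,1}_loc(Ω) be continuous with U > 0 on Ω, and let v ∈ W^{1,1}_loc(Ω) satisfy v ∇U − U ∇v = 0 almost everywhere in Ω. Then v is a constant multiple of U on Ω. -/
/-!
The quotient `w = v / U` is differentiable on `Ω`, and its derivative vanishes off a null set `Z`.
By Fubini, almost every translate of a given segment meets `Z` in a null set of parameters, and
along such a segment the fundamental theorem of calculus (which only needs everywhere
differentiability and an a.e. vanishing derivative) gives equal values of `w` at the endpoints.
Letting the translation tend to `0`, continuity of `w` makes it constant on convex open subsets of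
`Ω`, hence locally constant, hence constant on the connected set `Ω`.
-/

open MeasureTheory Filter Topology Set

variable {E F : Type*} [NormedAddCommGroup E] [NormedSpace ℝ E] [NormedAddCommGroup F]
  [NormedSpace ℝ F]

theorem hasFDerivAt_div_zero_of_smul_fderiv_eq {U v : E → ℝ} {x : E}
    (hU : DifferentiableAt ℝ U x) (hv : DifferentiableAt ℝ v x) (hUx : U x ≠ 0)
    (h : v x • fderiv ℝ U x = U x • fderiv ℝ v x) :
    HasFDerivAt (fun y => v y / U y) (0 : E →L[ℝ] ℝ) x := by
  have hinv : HasFDerivAt (fun y => (U y)⁻¹) ((-(U x ^ 2)⁻¹) • fderiv ℝ U x) x :=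
    (hasDerivAt_inv hUx).comp_hasFDerivAt x hU.hasFDerivAt
  have hzero : v x • ((-(U x ^ 2)⁻¹) • fderiv ℝ U x) + (U x)⁻¹ • fderiv ℝ v x = 0 := by
    rw [smul_comm, h, smul_smul, ← add_smul]
    have : -(U x ^ 2)⁻¹ * U x + (U x)⁻¹ = 0 := by field_simp; ring
    rw [this, zero_smul]
  have hmul := hv.hasFDerivAt.mul hinv
  rw [hzero] at hmul
  exact hmul.congr_of_eventuallyEq (.of_forall fun y => div_eq_mul_inv (v y) (U y))

theorem eq_of_hasDerivAt_of_ae_eq_zero [CompleteSpace F] {f f' : ℝ → F} {a b : ℝ}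
    (hf : ∀ t ∈ uIcc a b, HasDerivAt f (f' t) t) (h0 : ∀ᵐ t, t ∈ uIcc a b → f' t = 0) :
    f b = f a := by
  have h0' : ∀ᵐ t, t ∈ uIoc a b → f' t = 0 := by
    filter_upwards [h0] with t ht ht' using ht (uIoc_subset_uIcc ht')
  have hint : IntervalIntegrable f' volume a b :=
    (intervalIntegrable_const (c := (0 : F))).congr_ae <| (ae_restrict_iff' measurableSet_uIoc).2 <|
      by filter_upwards [h0'] with t ht ht' using (ht ht').symm
  have hftc := intervalIntegral.integral_eq_sub_of_hasDerivAt hf hint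
  rw [intervalIntegral.integral_congr_ae h0', intervalIntegral.integral_zero] at hftc
  exact sub_eq_zero.1 hftc.symm

theorem eq_of_fderiv_eq_zero_ae_on_segment [CompleteSpace F] {w : E → F} {u b : E} {Z : Set E}
    (hw : ∀ t ∈ Icc (0 : ℝ) 1, DifferentiableAt ℝ w (u + t • b))
    (h0 : ∀ t ∈ Icc (0 : ℝ) 1, u + t • b ∉ Z → fderiv ℝ w (u + t • b) = 0)
    (hZ : volume {t : ℝ | u + t • b ∈ Z} = 0) : w (u + b) = w u := by
  have hline : ∀ t : ℝ, HasDerivAt (fun s : ℝ => u + s • b) b t := fun t => by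
    simpa using ((hasDerivAt_id t).smul_const b).const_add u
  have hI : uIcc (0 : ℝ) 1 = Icc 0 1 := uIcc_of_le zero_le_one
  have hends := eq_of_hasDerivAt_of_ae_eq_zero (f := fun t : ℝ => w (u + t • b)) (a := 0) (b := 1)
    (f' := fun t => fderiv ℝ w (u + t • b) b)
    (fun t ht => (hw t (hI ▸ ht)).hasFDerivAt.comp_hasDerivAt t (hline t))
    (by
      filter_upwards [measure_eq_zero_iff_ae_notMem.1 hZ] with t htZ ht
      rw [h0 t (hI ▸ ht) htZ]
      rfl)
  simpa using hends

theorem nhds_inf_ae_neBot {X : Type*} [TopologicalSpace X] [MeasurableSpace X] (μ : Measure X)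
    [μ.IsOpenPosMeasure] (x : X) : (𝓝 x ⊓ ae μ).NeBot := by
  refine inf_neBot_iff.2 fun s hs t ht => nonempty_of_measure_ne_zero (μ := μ) ?_
  rw [measure_inter_conull ht]
  exact (μ.measure_pos_of_mem_nhds hs).ne'

section AddHaar

variable [MeasurableSpace E] [BorelSpace E] [FiniteDimensional ℝ E] (μ : Measure E)
  [μ.IsAddHaarMeasure]

theorem ae_volume_line_preimage_null {Z : Set E} (hZ : μ Z = 0) (b : E) : ∀ᵐ u ∂μ, volume {t : ℝ | u + t • b ∈ Z} = 0 := by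
  obtain ⟨Z', hZZ', hZ'm, hZ'0⟩ := exists_measurable_superset_of_null hZ
  have hm : MeasurableSet {p : E × ℝ | p.1 + p.2 • b ∈ Z'} :=
    hZ'm.preimage (by fun_prop)
  have hprod : (μ.prod volume) {p : E × ℝ | p.1 + p.2 • b ∈ Z'} = 0 := by
    rw [Measure.prod_apply_symm hm]
    have : ∀ t : ℝ, μ {u | u + t • b ∈ Z'} = 0 := fun t =>
      (measure_preimage_add_right μ (t • b) Z').trans hZ'0
    simp [this]
  filter_upwards [(Measure.measure_prod_null hm).1 hprod] with u hu
  exact measure_mono_null (fun t ht => hZZ' ht) hu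

theorem Convex.is_const_of_fderiv_eq_zero_ae [CompleteSpace F] {w : E → F} {B : Set E}
    (hBo : IsOpen B) (hB : Convex ℝ B)
    (hw : ∀ x ∈ B, DifferentiableAt ℝ w x) (h0 : ∀ᵐ x ∂μ, x ∈ B → fderiv ℝ w x = 0)
    {y z : E} (hy : y ∈ B) (hz : z ∈ B) : w z = w y := by
  have hshift : Tendsto (· + (z - y)) (𝓝 y) (𝓝 z) := by
    simpa using (continuous_add_const (z - y)).tendsto y
  have := nhds_inf_ae_neBot μ y
  have hgood : ∀ᶠ u in 𝓝 y ⊓ ae μ, w (u + (z - y)) = w u := by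
    have hnear : ∀ᶠ u in 𝓝 y, u ∈ B ∧ u + (z - y) ∈ B :=
      Eventually.and (hBo.mem_nhds hy) (hshift.eventually (hBo.mem_nhds hz))
    filter_upwards [inf_le_left (b := ae μ) hnear,
      inf_le_right (a := 𝓝 y) (ae_volume_line_preimage_null μ (ae_iff.1 h0) (z - y))]
      with u hu hline
    have hseg : ∀ t ∈ Icc (0 : ℝ) 1, u + t • (z - y) ∈ B := fun t ht => by
      simpa using hB.add_smul_sub_mem hu.1 hu.2 ht
    exact eq_of_fderiv_eq_zero_ae_on_segment (Z := {x | ¬(x ∈ B → fderiv ℝ w x = 0)})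
      (fun t ht => hw _ (hseg t ht)) (fun t ht hZ => not_not.1 hZ (hseg t ht)) hline
  have hlim_y : Tendsto w (𝓝 y ⊓ ae μ) (𝓝 (w y)) :=
    (hw y hy).continuousAt.tendsto.mono_left inf_le_left
  have hlim_z : Tendsto (fun u => w (u + (z - y))) (𝓝 y ⊓ ae μ) (𝓝 (w z)) :=
    ((hw z hz).continuousAt.tendsto.comp hshift).mono_left inf_le_left
  exact tendsto_nhds_unique_of_eventuallyEq hlim_z hlim_y hgood

theorem IsOpen.is_const_of_fderiv_eq_zero_ae [CompleteSpace F] {w : E → F} {s : Set E}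
    (hs : IsOpen s) (hs' : IsPreconnected s)
    (hw : ∀ x ∈ s, DifferentiableAt ℝ w x) (h0 : ∀ᵐ x ∂μ, x ∈ s → fderiv ℝ w x = 0)
    {x y : E} (hx : x ∈ s) (hy : y ∈ s) : w x = w y := by
  have : PreconnectedSpace s := isPreconnected_iff_preconnectedSpace.1 hs'
  have hloc : IsLocallyConstant fun p : s => w p := by
    refine (IsLocallyConstant.iff_eventually_eq _).2 fun ⟨a, ha⟩ => ?_
    obtain ⟨r, hr, hball⟩ := Metric.isOpen_iff.1 hs a ha
    have hconst : ∀ b ∈ Metric.ball a r, w b = w a := fun b hb =>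
      (convex_ball a r).is_const_of_fderiv_eq_zero_ae μ Metric.isOpen_ball
        (fun c hc => hw c (hball hc))
        (by filter_upwards [h0] with c hc hcb using hc (hball hcb))
        (Metric.mem_ball_self hr) hb
    exact (continuous_subtype_val.tendsto ⟨a, ha⟩).eventually (Metric.ball_mem_nhds a hr) |>.mono
      fun b hb => hconst b hb
  exact hloc.apply_eq_of_preconnectedSpace ⟨x, hx⟩ ⟨y, hy⟩

end AddHaar

theorem stmt16_general {N : ℕ} (Ω : Set (EuclideanSpace ℝ (Fin N)))
    (hΩo : IsOpen Ω) (hΩc : IsConnected Ω)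
    (U v : EuclideanSpace ℝ (Fin N) → ℝ)
    (hUpos : ∀ x ∈ Ω, 0 < U x)
    (hU : ∀ x ∈ Ω, DifferentiableAt ℝ U x)
    (hv : ∀ x ∈ Ω, DifferentiableAt ℝ v x)
    (hrel : ∀ᵐ x ∂(volume.restrict Ω), v x • gradient U x - U x • gradient v x = 0) :
    ∃ c : ℝ, ∀ x ∈ Ω, v x = c * U x := by
  obtain ⟨x₀, hx₀⟩ := hΩc.nonempty
  have hquot_diff : ∀ x ∈ Ω, DifferentiableAt ℝ (fun y => v y / U y) x := fun x hx =>
    ((hv x hx).mul ((hU x hx).inv (hUpos x hx).ne')).congr_of_eventuallyEq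
      (.of_forall fun y => div_eq_mul_inv (v y) (U y))
  have hquot_deriv : ∀ᵐ x, x ∈ Ω → fderiv ℝ (fun y => v y / U y) x = 0 := by
    filter_upwards [(ae_restrict_iff' hΩo.measurableSet).1 hrel] with x hx hxΩ
    have hfderiv := hx hxΩ
    rw [gradient, gradient, ← map_smul, ← map_smul, ← map_sub,
      LinearIsometryEquiv.map_eq_zero_iff, sub_eq_zero] at hfderiv
    exact (hasFDerivAt_div_zero_of_smul_fderiv_eq (hU x hxΩ) (hv x hxΩ) (hUpos x hxΩ).ne'
      hfderiv).fderiv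
  refine ⟨v x₀ / U x₀, fun x hx => ?_⟩
  have := hΩo.is_const_of_fderiv_eq_zero_ae volume hΩc.isPreconnected hquot_diff hquot_deriv
    hx hx₀
  rw [← this, div_mul_cancel₀ _ (hUpos x hx).ne']

theorem stmt16 {N : ℕ} (Ω : Set (EuclideanSpace ℝ (Fin N)))
    (hΩo : IsOpen Ω) (hΩc : IsConnected Ω)
    (U v : EuclideanSpace ℝ (Fin N) → ℝ)
    (hUc : ContinuousOn U Ω) (hUpos : ∀ x ∈ Ω, 0 < U x)
    (hU : ∀ x ∈ Ω, DifferentiableAt ℝ U x)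
    (hv : ∀ x ∈ Ω, DifferentiableAt ℝ v x)
    (hrel : ∀ᵐ x ∂(volume.restrict Ω), v x • gradient U x - U x • gradient v x = 0) :
    ∃ c : ℝ, ∀ x ∈ Ω, v x = c * U x :=
  stmt16_general Ω hΩo hΩc U v hUpos hU hv hrel
end
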